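/- arXiv:1311.7227 — 6 statements merged into one kernel-verified Lean document; each statement's English description precedes it below -/
import Mathlib

section
/- For all integers k ≥ 2 and h with 1 ≤ h < k and gcd(h,k) = 1, one has ((1 − k²)/12)·log 2 + (k/12)·log k ≤ C_{h,k} ≤ ((k−1)(k−2)/24)·log 2 − (k/24)·log k. -/
/-!
Write `log|2 sin(π j h/k)| = log 2 + t_j` with `t_j ≤ 0`. Since `h` is prime to `k`,
`e^{2π i h/k}` is a primitive `k`-th root of unity `μ`, and `∏_{j=1}^{k-1} (1 - μ^j) = k` gives
`∑ t_j = log k - (k-1) log 2`. Together with `∑_{j=1}^{k-1} B₂(j/k) = (1-k)/(6k)`, the bounds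
follow from `-1/12 ≤ B₂ ≤ 1/6` on `[0, 1]`.
-/

noncomputable def Chk (h k : ℕ) : ℝ :=
  ((k : ℝ) / 2) * ∑ j ∈ Finset.Icc 1 (k - 1),
    (((j : ℝ) / k) ^ 2 - (j : ℝ) / k + 1 / 6) *
      Real.log |2 * Real.sin (Real.pi * j * h / k)|

open Finset Real

noncomputable def bernoulliTwo (x : ℝ) : ℝ := x ^ 2 - x + 1 / 6

lemma neg_inv_twelve_le_bernoulliTwo (x : ℝ) : -(1 / 12) ≤ bernoulliTwo x := by
  unfold bernoulliTwo
  nlinarith [sq_nonneg (x - 1 / 2)]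

lemma bernoulliTwo_le_inv_six {x : ℝ} (hx₀ : 0 ≤ x) (hx₁ : x ≤ 1) : bernoulliTwo x ≤ 1 / 6 := by
  unfold bernoulliTwo
  nlinarith

lemma sum_Icc_bernoulliTwo_div (n k : ℕ) (hk : (k : ℝ) ≠ 0) :
    ∑ j ∈ Icc 1 n, bernoulliTwo (j / k) =
      n * ((n + 1) * (2 * n + 1) - 3 * k * (n + 1) + k ^ 2) / (6 * k ^ 2) := by
  induction n with
  | zero => simp
  | succ n ih =>
    rw [sum_Icc_succ_top (by omega), ih, bernoulliTwo]
    field_simp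
    push_cast
    ring

lemma sum_bernoulliTwo_div (k : ℕ) (hk : 0 < k) :
    ∑ j ∈ Icc 1 (k - 1), bernoulliTwo (j / k) = (1 - k) / (6 * k) := by
  have hkR : (k : ℝ) ≠ 0 := by positivity
  rw [sum_Icc_bernoulliTwo_div _ _ hkR, Nat.cast_pred hk]
  field_simp
  ring

lemma mul_sum_le_sum_mul_of_nonpos {ι : Type*} (s : Finset ι) {b t : ι → ℝ} {c : ℝ}
    (hb : ∀ i ∈ s, b i ≤ c) (ht : ∀ i ∈ s, t i ≤ 0) : c * ∑ i ∈ s, t i ≤ ∑ i ∈ s, b i * t i := by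
  rw [mul_sum]
  exact sum_le_sum fun i hi => mul_le_mul_of_nonpos_right (hb i hi) (ht i hi)

lemma sum_mul_le_mul_sum_of_nonpos {ι : Type*} (s : Finset ι) {b t : ι → ℝ} {a : ℝ}
    (hb : ∀ i ∈ s, a ≤ b i) (ht : ∀ i ∈ s, t i ≤ 0) : ∑ i ∈ s, b i * t i ≤ a * ∑ i ∈ s, t i := by
  rw [mul_sum]
  exact sum_le_sum fun i hi => mul_le_mul_of_nonpos_right (hb i hi) (ht i hi)

lemma IsPrimitiveRoot.prod_Icc_one_sub_pow {R : Type*} [CommRing R] [IsDomain R] {k : ℕ}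
    (hk : 0 < k) {μ : R} (hμ : IsPrimitiveRoot μ k) : ∏ j ∈ Icc 1 (k - 1), (1 - μ ^ j) = k := by
  obtain ⟨n, rfl⟩ := Nat.exists_eq_add_one_of_ne_zero hk.ne'
  rw [Nat.add_sub_cancel, ← Ico_add_one_right_eq_Icc, prod_Ico_eq_prod_range, Nat.add_sub_cancel,
    Nat.cast_succ, ← hμ.prod_one_sub_pow_eq_order]
  simp only [add_comm 1]

lemma prod_abs_two_mul_sin (h k : ℕ) (hk : 0 < k) (hhk : h.Coprime k) :
    ∏ j ∈ Icc 1 (k - 1), |2 * sin (π * j * h / k)| = k := by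
  have hμ := Complex.isPrimitiveRoot_exp_of_coprime h k hk.ne' hhk
  have hnorm := congrArg (‖·‖) (hμ.prod_Icc_one_sub_pow hk)
  simp only [norm_prod, Complex.norm_natCast] at hnorm
  refine (prod_congr rfl fun j _ => ?_).trans hnorm
  rw [norm_sub_rev, ← Complex.exp_nat_mul,
    show (j : ℂ) * (2 * π * Complex.I * (h / k)) = Complex.I * ((2 * π * j * h / k : ℝ) : ℂ) by
      push_cast; ring,
    Complex.norm_exp_I_mul_ofReal_sub_one, norm_eq_abs]
  ring_nf

lemma sum_log_abs_two_mul_sin (h k : ℕ) (hk : 0 < k) (hhk : h.Coprime k) :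
    ∑ j ∈ Icc 1 (k - 1), log |2 * sin (π * j * h / k)| = log k := by
  have hprod := prod_abs_two_mul_sin h k hk hhk
  have hprod_ne : ∏ j ∈ Icc 1 (k - 1), |2 * sin (π * j * h / k)| ≠ 0 := by
    rw [hprod]; exact_mod_cast hk.ne'
  rw [← log_prod (prod_ne_zero_iff.1 hprod_ne), hprod]

lemma log_abs_two_mul_sin_le (θ : ℝ) : log |2 * sin θ| ≤ log 2 := by
  rcases eq_or_ne (sin θ) 0 with h | h
  · simp [h, log_nonneg one_le_two]
  · refine log_le_log (by positivity) ?_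
    rw [abs_mul, abs_two]
    nlinarith [abs_sin_le_one θ]

lemma Chk_eq_sum_bernoulliTwo_mul (h k : ℕ) (hk : 0 < k) :
    Chk h k = k / 2 * ((1 - k) / (6 * k) * log 2 +
      ∑ j ∈ Icc 1 (k - 1), bernoulliTwo (j / k) * (log |2 * sin (π * j * h / k)| - log 2)) := by
  rw [Chk, ← sum_bernoulliTwo_div k hk, sum_mul, ← sum_add_distrib]
  congr 2 with j
  rw [bernoulliTwo]
  ring

lemma sum_log_abs_two_mul_sin_sub_log_two (h k : ℕ) (hk : 0 < k) (hhk : h.Coprime k) :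
    ∑ j ∈ Icc 1 (k - 1), (log |2 * sin (π * j * h / k)| - log 2) = log k - (k - 1) * log 2 := by
  rw [sum_sub_distrib, sum_log_abs_two_mul_sin h k hk hhk, sum_const, Nat.card_Icc, nsmul_eq_mul,
    Nat.add_sub_cancel, Nat.cast_pred hk]

theorem Chk_bounds_general (h k : ℕ) (hk : 2 ≤ k)
    (hgcd : Nat.gcd h k = 1) :
    ((1 - (k : ℝ) ^ 2) / 12) * Real.log 2 + ((k : ℝ) / 12) * Real.log k ≤ Chk h k ∧
    Chk h k ≤ (((k : ℝ) - 1) * ((k : ℝ) - 2) / 24) * Real.log 2 -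
      ((k : ℝ) / 24) * Real.log k := by
  have hk₀ : 0 < k := by omega
  have hkR : (0 : ℝ) < k := by exact_mod_cast hk₀
  set b : ℕ → ℝ := fun j => bernoulliTwo (j / k)
  set t : ℕ → ℝ := fun j => log |2 * sin (π * j * h / k)| - log 2
  have ht : ∀ j ∈ Icc 1 (k - 1), t j ≤ 0 := fun j _ => sub_nonpos.2 (log_abs_two_mul_sin_le _)
  have hb_le : ∀ j ∈ Icc 1 (k - 1), b j ≤ 1 / 6 := fun j hj => by
    have hjk : (j : ℝ) ≤ k := by exact_mod_cast (mem_Icc.1 hj).2.trans (Nat.sub_le k 1)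
    exact bernoulliTwo_le_inv_six (by positivity) (div_le_one_of_le₀ hjk hkR.le)
  have hb_ge : ∀ j ∈ Icc 1 (k - 1), -(1 / 12) ≤ b j := fun j _ => neg_inv_twelve_le_bernoulliTwo _
  have hT : ∑ j ∈ Icc 1 (k - 1), t j = log k - (k - 1) * log 2 :=
    sum_log_abs_two_mul_sin_sub_log_two h k hk₀ hgcd
  have hS_ge := mul_sum_le_sum_mul_of_nonpos _ hb_le ht
  have hS_le := sum_mul_le_mul_sum_of_nonpos _ hb_ge ht
  rw [hT] at hS_ge hS_le
  rw [Chk_eq_sum_bernoulliTwo_mul h k hk₀]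
  constructor
  · calc _ = k / 2 * ((1 - k) / (6 * k) * log 2 + 1 / 6 * (log k - (k - 1) * log 2)) := by
          field_simp; ring
      _ ≤ _ := by gcongr
  · calc _ ≤ k / 2 * ((1 - k) / (6 * k) * log 2 + -(1 / 12) * (log k - (k - 1) * log 2)) := by
          gcongr
      _ = _ := by field_simp; ring

theorem Chk_bounds (h k : ℕ) (hk : 2 ≤ k) (hh1 : 1 ≤ h) (hh : h < k)
    (hgcd : Nat.gcd h k = 1) :
    ((1 - (k : ℝ) ^ 2) / 12) * Real.log 2 + ((k : ℝ) / 12) * Real.log k ≤ Chk h k ∧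
    Chk h k ≤ (((k : ℝ) - 1) * ((k : ℝ) - 2) / 24) * Real.log 2 -
      ((k : ℝ) / 24) * Real.log k :=
  Chk_bounds_general h k hk hgcd
end

section
/- Let k ≥ 2 and let h, h′ be integers with 1 ≤ h, h′ < k, gcd(h,k) = 1, and h·h′ ≡ 1 (mod k). Then C_{h′,k} = (k·log k)/12 − (k/2)·b_{h,k}. -/
/-- The generalized Dedekind sum
`b_{h,k} = ∑_{j=1}^{k-1} {hj/k}(1 - {hj/k}) log|2 sin(π j/k)|`,
where `{x}` is the fractional part of `x`. -/
noncomputable def bhk (h k : ℕ) : ℝ :=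
  ∑ j ∈ Finset.Icc 1 (k - 1),
    Int.fract ((h : ℝ) * j / k) * (1 - Int.fract ((h : ℝ) * j / k)) *
      Real.log |2 * Real.sin (Real.pi * j / k)|

/-!
Since `B₂(x) = 1/6 - x(1 - x)`, the identity is a reindexing. Substituting `m = h j mod k`
permutes `1, …, k-1` (with inverse `m ↦ h' m mod k`), turns `m/k` into `{h j/k}`, and turns
`|sin(π m h'/k)|` into `|sin(π j/k)|` because `m h' ≡ j (mod k)`. The remaining
`(1/6) ∑ log|2 sin(π j/k)|` equals `(log k)/6` by `∏_{j=1}^{k-1} |1 - ζ^j| = k` for a primitive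
`k`-th root of unity `ζ`.
-/

open Finset Real

theorem Nat.mul_mod_mul_modEq_self {a b k : ℕ} (hab : a * b ≡ 1 [MOD k]) (j : ℕ) :
    a * j % k * b ≡ j [MOD k] :=
  calc a * j % k * b ≡ a * j * b [MOD k] := (Nat.mod_modEq _ _).mul_right b
    _ = a * b * j := by ring
    _ ≡ 1 * j [MOD k] := hab.mul_right j
    _ = j := one_mul j

theorem Nat.mul_mod_mem_Icc {a b k j : ℕ} (hab : a * b ≡ 1 [MOD k]) (hj : j ∈ Icc 1 (k - 1)) :
    a * j % k ∈ Icc 1 (k - 1) := by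
  rw [mem_Icc] at hj ⊢
  have hne : a * j % k ≠ 0 := fun h0 => by
    have := Nat.mul_mod_mul_modEq_self hab j
    rw [h0, zero_mul, Nat.ModEq, Nat.zero_mod, Nat.mod_eq_of_lt (by omega)] at this
    omega
  have := Nat.mod_lt (a * j) (show 0 < k by omega)
  omega

theorem Finset.sum_Icc_comp_mul_mod {M : Type*} [AddCommMonoid M] {a b k : ℕ}
    (hab : a * b ≡ 1 [MOD k]) (f : ℕ → M) :
    ∑ j ∈ Icc 1 (k - 1), f (a * j % k) = ∑ j ∈ Icc 1 (k - 1), f j := by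
  have hba : b * a ≡ 1 [MOD k] := by rwa [mul_comm]
  have inverse {c d : ℕ} (hcd : c * d ≡ 1 [MOD k]) {j : ℕ} (hj : j ∈ Icc 1 (k - 1)) :
      d * (c * j % k) % k = j := by
    rw [mul_comm, Nat.mul_mod_mul_modEq_self hcd j, Nat.mod_eq_of_lt]
    rw [mem_Icc] at hj; omega
  exact sum_nbij' (fun j => a * j % k) (fun j => b * j % k)
    (fun _ => Nat.mul_mod_mem_Icc hab) (fun _ => Nat.mul_mod_mem_Icc hba)
    (fun _ => inverse hab) (fun _ => inverse hba) (fun _ _ => rfl)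

theorem Real.abs_sin_pi_mul_div_eq_of_modEq {a b k : ℕ} (hab : a ≡ b [MOD k]) :
    |sin (π * a / k)| = |sin (π * b / k)| := by
  suffices h : ∀ a : ℕ, |sin (π * a / k)| = |sin (π * (a % k : ℕ) / k)| by
    rw [h a, h b, hab]
  intro a
  rcases Nat.eq_zero_or_pos k with rfl | hk
  · rw [Nat.mod_zero]
  have : π * a / k = π * (a % k : ℕ) / k + (a / k : ℕ) * π := by
    conv_lhs => rw [← Nat.mod_add_div a k]
    push_cast
    field_simp
  rw [this, sin_add_nat_mul_pi, abs_mul, abs_pow, abs_neg, abs_one, one_pow, one_mul]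

theorem Real.prod_abs_two_mul_sin_pi_mul_div {n : ℕ} (hn : 0 < n) :
    ∏ j ∈ Icc 1 (n - 1), |2 * sin (π * j / n)| = n := by
  obtain ⟨m, rfl⟩ : ∃ m, n = m + 1 := ⟨n - 1, by omega⟩
  have hμ := Complex.isPrimitiveRoot_exp (m + 1) m.succ_ne_zero
  have hnorm := congrArg (‖·‖) hμ.prod_one_sub_pow_eq_order
  have hfactor (j : ℕ) : ‖1 - Complex.exp (2 * π * Complex.I / (m + 1 : ℕ)) ^ (j + 1)‖ =
      |2 * sin (π * (j + 1 : ℕ) / (m + 1 : ℕ))| := by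
    have hexp : Complex.exp (2 * π * Complex.I / (m + 1 : ℕ)) ^ (j + 1) =
        Complex.exp (Complex.I * (2 * π * (j + 1 : ℕ) / (m + 1 : ℕ) : ℝ)) := by
      rw [← Complex.exp_nat_mul]; push_cast; ring_nf
    rw [hexp, norm_sub_rev, Complex.norm_exp_I_mul_ofReal_sub_one, Real.norm_eq_abs]
    ring_nf
  simp only [norm_prod, hfactor] at hnorm
  rw [range_eq_Ico, prod_Ico_add' (fun j : ℕ => |2 * sin (π * j / (m + 1 : ℕ))|),
    Ico_add_one_right_eq_Icc] at hnorm
  rw [Nat.add_sub_cancel, hnorm]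
  exact_mod_cast Complex.norm_natCast (m + 1)

theorem Real.sum_log_abs_two_mul_sin_pi_mul_div {n : ℕ} (hn : 0 < n) :
    ∑ j ∈ Icc 1 (n - 1), log |2 * sin (π * j / n)| = log n := by
  have hprod := prod_abs_two_mul_sin_pi_mul_div hn
  have hne : ∀ j ∈ Icc 1 (n - 1), |2 * sin (π * j / n)| ≠ 0 :=
    prod_ne_zero_iff.mp (by rw [hprod]; exact_mod_cast hn.ne')
  rw [← log_prod hne, hprod]

theorem Chk_bhk_relation_general (h h' k : ℕ) (hk : 2 ≤ k) (hinv : h * h' ≡ 1 [MOD k]) :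
    Chk h' k = (k : ℝ) * Real.log k / 12 - ((k : ℝ) / 2) * bhk h k := by
  have hfract (j : ℕ) : ((h * j % k : ℕ) : ℝ) / k = Int.fract ((h : ℝ) * j / k) := by
    rw [← Int.fract_div_natCast_eq_div_natCast_mod]; push_cast; rfl
  have hsin (j : ℕ) : |sin (π * (h * j % k : ℕ) * h' / k)| = |sin (π * j / k)| := by
    rw [mul_assoc, ← Nat.cast_mul,
      abs_sin_pi_mul_div_eq_of_modEq (Nat.mul_mod_mul_modEq_self hinv j)]
  calc Chk h' k
      = (k / 2) * ∑ j ∈ Icc 1 (k - 1), (1 / 6 * log |2 * sin (π * j / k)| -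
          Int.fract ((h : ℝ) * j / k) * (1 - Int.fract ((h : ℝ) * j / k)) *
            log |2 * sin (π * j / k)|) := by
        rw [Chk, ← sum_Icc_comp_mul_mod hinv]
        congr 1
        refine sum_congr rfl fun j _ => ?_
        rw [abs_mul, hsin, ← abs_mul, hfract]
        ring
    _ = (k : ℝ) * Real.log k / 12 - ((k : ℝ) / 2) * bhk h k := by
        rw [sum_sub_distrib, ← mul_sum, sum_log_abs_two_mul_sin_pi_mul_div (by omega), bhk]
        ring

theorem Chk_bhk_relation (h h' k : ℕ) (hk : 2 ≤ k)
    (hh1 : 1 ≤ h) (hh : h < k) (hh'1 : 1 ≤ h') (hh' : h' < k)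
    (hgcd : Nat.gcd h k = 1) (hinv : h * h' ≡ 1 [MOD k]) :
    Chk h' k = (k : ℝ) * Real.log k / 12 - ((k : ℝ) / 2) * bhk h k :=
  Chk_bhk_relation_general h h' k hk hinv
end

section
/- For all integers k ≥ 2 and h with 1 ≤ h < k and gcd(h,k) = 1, one has |(k²/6)·Σ_{d=1}^{k-1} B₃(d/k)·cot(π d h/k)| ≤ (2·k³/(2π)³)·ζ(3), where B₃(x) = x³ − (3/2)x² + (1/2)x is the third Bernoulli polynomial. -/
open Real Finset

lemma bern3_eval (x : ℝ) : (Polynomial.aeval x) (Polynomial.bernoulli 3)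
    = x^3 - 3/2*x^2 + 1/2*x := by
  rw [Polynomial.aeval_def, Polynomial.eval₂_eq_eval_map]
  simp [Polynomial.bernoulli, Finset.sum_range_succ, Polynomial.eval_finset_sum]
  norm_num [bernoulli, bernoulli'_two]
  ring

lemma sin_mul_cot (θ : ℝ) (hθ : Real.sin θ ≠ 0) (n : ℕ) :
    Real.sin (2*(n+1)*θ) * Real.cot θ
      = 1 + Real.cos (2*(n+1)*θ) + 2 * ∑ j ∈ Finset.range n, Real.cos (2*(j+1)*θ) := by
  induction n with
  | zero =>
    simp only [Finset.range_zero, Finset.sum_empty, mul_zero, add_zero, Nat.cast_zero, zero_add]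
    rw [Real.cot_eq_cos_div_sin, show (2*(1:ℝ)*θ) = 2*θ by ring, Real.sin_two_mul,
      Real.cos_two_mul]
    field_simp
    ring
  | succ n ih =>
    have key : Real.sin (2*((n:ℝ)+1+1)*θ) - Real.sin (2*((n:ℝ)+1)*θ)
        = 2 * Real.sin θ * Real.cos ((2*(n:ℝ)+3)*θ) := by
      rw [Real.sin_sub_sin]
      ring_nf
    have key2 : (Real.sin (2*((n:ℝ)+1+1)*θ) - Real.sin (2*((n:ℝ)+1)*θ)) * Real.cot θ
        = Real.cos (2*((n:ℝ)+1+1)*θ) + Real.cos (2*((n:ℝ)+1)*θ) := by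
      rw [key, Real.cot_eq_cos_div_sin]
      have expand : 2 * Real.cos ((2*(n:ℝ)+3)*θ) * Real.cos θ
          = Real.cos (2*((n:ℝ)+1+1)*θ) + Real.cos (2*((n:ℝ)+1)*θ) := by
        rw [show Real.cos (2*((n:ℝ)+1+1)*θ) + Real.cos (2*((n:ℝ)+1)*θ)
            = 2 * Real.cos ((2*((n:ℝ)+1+1)*θ + 2*((n:ℝ)+1)*θ)/2)
              * Real.cos ((2*((n:ℝ)+1+1)*θ - 2*((n:ℝ)+1)*θ)/2) from Real.cos_add_cos _ _]
        ring_nf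
      rw [show 2 * Real.sin θ * Real.cos ((2*(n:ℝ)+3)*θ) * (Real.cos θ / Real.sin θ)
          = (2 * Real.cos ((2*(n:ℝ)+3)*θ) * Real.cos θ) * (Real.sin θ / Real.sin θ) by ring,
        div_self hθ, mul_one, expand]
    push_cast
    rw [Finset.sum_range_succ]
    push_cast at ih key2 ⊢
    nlinarith [ih, key2]

lemma cos_sum_range (k r : ℕ) (hk : 2 ≤ k) (hr : ¬ (k ∣ r)) :
    ∑ d ∈ Finset.range k, Real.cos (2*π*r*d/k) = 0 := by
  have hk0 : (k:ℝ) ≠ 0 := by positivity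
  set z : ℂ := Complex.exp ((2*π*r/k : ℝ) * Complex.I) with hz
  have hzd : ∀ d : ℕ, z^d = Complex.exp ((2*π*r*d/k : ℝ) * Complex.I) := by
    intro d
    rw [hz, ← Complex.exp_nat_mul]
    congr 1
    push_cast
    ring
  have hz1 : z ≠ 1 := by
    rw [hz, Ne, Complex.exp_eq_one_iff]
    push_neg
    intro n hn
    rw [show ((n:ℂ) * (2 * ↑π * Complex.I)) = ((((n:ℝ) * (2*π) : ℝ)):ℂ) * Complex.I by
      push_cast; ring] at hn
    have h2 : (2*π*r/k : ℝ) = (n:ℝ) * (2*π) := by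
      exact_mod_cast mul_right_cancel₀ Complex.I_ne_zero hn
    have hπ : (0:ℝ) < π := Real.pi_pos
    have h3 : (r : ℝ) = (n:ℝ) * k := by
      field_simp at h2
      nlinarith [h2]
    have h4 : (r : ℤ) = n * k := by exact_mod_cast h3
    have h5 : (k:ℤ) ∣ (r:ℤ) := ⟨n, by linarith⟩
    exact hr (Int.natCast_dvd_natCast.mp h5)
  have hzk : z^k = 1 := by
    rw [hzd k]
    rw [show (2*π*r*k/k : ℝ) = 2*π*r by field_simp]
    rw [show (((2*π*(r:ℝ)):ℝ):ℂ) * Complex.I = (r:ℤ) * (2*π*Complex.I) by push_cast; ring]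
    exact Complex.exp_int_mul_two_pi_mul_I r
  have hgeom : ∑ d ∈ Finset.range k, z^d = 0 := by
    rw [geom_sum_eq hz1, hzk]
    simp
  have : ∑ d ∈ Finset.range k, Real.cos (2*π*r*d/k)
      = (∑ d ∈ Finset.range k, z^d).re := by
    rw [Complex.re_sum]
    refine Finset.sum_congr rfl fun d _ => ?_
    rw [hzd d, Complex.exp_ofReal_mul_I_re]
  rw [this, hgeom, Complex.zero_re]

lemma cos_sum_Icc (k r : ℕ) (hk : 2 ≤ k) (hr : ¬ (k ∣ r)) :
    ∑ d ∈ Finset.Icc 1 (k-1), Real.cos (2*π*r*d/k) = -1 := by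
  have h1 : Finset.range k = insert 0 (Finset.Icc 1 (k-1)) := by
    ext x; simp; omega
  have h2 := cos_sum_range k r hk hr
  rw [h1, Finset.sum_insert (by simp)] at h2
  simp only [Nat.cast_zero, mul_zero, zero_div, Real.cos_zero] at h2
  linarith

lemma inner_sum_bound (h k : ℕ) (hk : 2 ≤ k) (hh1 : 1 ≤ h) (hh : h < k)
    (hgcd : Nat.gcd h k = 1) (m : ℕ) :
    |∑ d ∈ Finset.Icc 1 (k-1), Real.sin (2*π*m*d/k) * Real.cot (π*d*h/k)| ≤ (k:ℝ) := by
  have hk0 : (k:ℝ) ≠ 0 := by positivity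
  have hπ : (0:ℝ) < π := Real.pi_pos
  have hcop : Nat.Coprime h k := hgcd
  set h' := h ^ (Nat.totient k - 1) with hh'
  have htot : 1 ≤ Nat.totient k := Nat.totient_pos.mpr (by omega)
  have hinv : Nat.ModEq k (h * h') 1 := by
    have e : h * h' = h ^ Nat.totient k := by
      rw [hh', ← pow_succ']
      congr 1
      omega
    rw [e]
    exact Nat.ModEq.pow_totient hcop
  set n := (m * h') % k with hn
  have hnk : n < k := Nat.mod_lt _ (by omega)
  have hcong : Nat.ModEq k (n * h) m :=
    calc n * h ≡ m * h' * h [MOD k] := (Nat.mod_modEq (m * h') k).mul_right h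
    _ = m * (h * h') := by ring
    _ ≡ m * 1 [MOD k] := hinv.mul_left m
    _ = m := by ring
  obtain ⟨t, ht⟩ := hcong.dvd
  have hsin : ∀ d : ℕ, Real.sin (2*π*m*d/k) = Real.sin (2*(n:ℝ)*(π*d*h/k)) := by
    intro d
    have hm : (m:ℝ) = (n:ℝ)*h + k*t := by
      have h2 : ((m:ℤ) - n*h : ℤ) = k*t := ht
      have h3 : ((m:ℝ) - (n:ℝ)*h) = (k:ℝ)*t := by exact_mod_cast h2
      linarith
    have e : 2*π*(m:ℝ)*d/k = 2*(n:ℝ)*(π*d*h/k) + ((t*(d:ℤ) : ℤ):ℝ)*(2*π) := by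
      rw [hm]
      push_cast
      field_simp
    rw [e, Real.sin_add_int_mul_two_pi]
  simp only [hsin]
  rcases Nat.eq_zero_or_pos n with hn0 | hn1
  · simp [hn0]
  · obtain ⟨N, hN⟩ : ∃ N, n = N + 1 := ⟨n - 1, by omega⟩
    rw [hN]
    have hsinθ : ∀ d ∈ Finset.Icc 1 (k-1), Real.sin (π*d*h/k) ≠ 0 := by
      intro d hd
      simp only [Finset.mem_Icc] at hd
      rw [Ne, Real.sin_eq_zero_iff]
      rintro ⟨s, hs⟩
      have hdh : ((d:ℝ)*h) = (s:ℝ)*k := by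
        field_simp at hs
        nlinarith [hs]
      have hdh2 : ((d*h : ℕ) : ℤ) = s*k := by exact_mod_cast hdh
      have hdvd : k ∣ d*h := by
        have : (k:ℤ) ∣ ((d*h:ℕ):ℤ) := ⟨s, by linarith⟩
        exact_mod_cast this
      have : k ∣ d := (Nat.Coprime.dvd_of_dvd_mul_right (hcop.symm)) hdvd
      have := Nat.le_of_dvd (by omega) this
      omega
    have hndvd : ∀ j : ℕ, 1 ≤ j → j < k → ¬ (k ∣ j * h) := by
      intro j hj1 hj2 hdvd
      have : k ∣ j := (Nat.Coprime.dvd_of_dvd_mul_right (hcop.symm)) hdvd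
      have := Nat.le_of_dvd (by omega) this
      omega
    have expand : ∀ d ∈ Finset.Icc 1 (k-1),
        Real.sin (2*((N+1 : ℕ) : ℝ)*(π*d*h/k)) * Real.cot (π*d*h/k)
          = 1 + Real.cos (2*π*(((N+1)*h : ℕ) : ℝ)*d/k)
            + 2 * ∑ j ∈ Finset.range N, Real.cos (2*π*(((j+1)*h : ℕ) : ℝ)*d/k) := by
      intro d hd
      rw [show ((N+1:ℕ):ℝ) = (N:ℝ)+1 by push_cast; ring]
      rw [sin_mul_cot _ (hsinθ d hd) N]
      congr 1
      · congr 2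
        push_cast; ring
      · congr 1
        refine Finset.sum_congr rfl fun j _ => ?_
        congr 1
        push_cast; ring
    rw [Finset.sum_congr rfl expand]
    have hval : ∑ d ∈ Finset.Icc 1 (k-1),
        (1 + Real.cos (2*π*(((N+1)*h : ℕ) : ℝ)*d/k)
          + 2 * ∑ j ∈ Finset.range N, Real.cos (2*π*(((j+1)*h : ℕ) : ℝ)*d/k))
        = (k:ℝ) - 2 - 2*N := by
      rw [Finset.sum_add_distrib, Finset.sum_add_distrib]
      rw [cos_sum_Icc k ((N+1)*h) hk (hndvd (N+1) (by omega) (by omega))]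
      rw [← Finset.mul_sum, Finset.sum_comm]
      rw [Finset.sum_congr rfl fun j (_ : j ∈ Finset.range N) =>
        cos_sum_Icc k ((j+1)*h) hk (hndvd (j+1) (by omega)
          (by have := Finset.mem_range.mp ‹j ∈ Finset.range N›; omega))]
      simp only [Finset.sum_const, Finset.card_range, Nat.card_Icc, Finset.sum_const,
        nsmul_eq_mul, mul_one, mul_neg, mul_one]
      have : ((k - 1 + 1 - 1 : ℕ) : ℝ) = (k:ℝ) - 1 := by
        have : k - 1 + 1 - 1 = k - 1 := by omega
        rw [this, Nat.cast_sub (by omega)]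
        norm_num
      rw [this]
      ring
    rw [hval]
    have hNk : (N:ℝ) ≤ (k:ℝ) - 2 := by
      have : N + 2 ≤ k := by omega
      have := (Nat.cast_le (α := ℝ)).mpr this
      push_cast at this
      linarith
    have hN0 : (0:ℝ) ≤ (N:ℝ) := Nat.cast_nonneg N
    rw [abs_le]
    constructor <;> [linarith; linarith]

/-- `ζ(3) = ∑_{n ≥ 1} 1/n³`. -/
noncomputable def zeta3 : ℝ := ∑' n : ℕ, 1 / ((n : ℝ) + 1) ^ 3

theorem vhk1_bound (h k : ℕ) (hk : 2 ≤ k) (hh1 : 1 ≤ h) (hh : h < k)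
    (hgcd : Nat.gcd h k = 1) :
    |((k : ℝ) ^ 2 / 6) * ∑ d ∈ Finset.Icc 1 (k - 1),
        (((d : ℝ) / k) ^ 3 - (3 / 2) * ((d : ℝ) / k) ^ 2 + (1 / 2) * ((d : ℝ) / k)) *
          Real.cot (Real.pi * d * h / k)|
      ≤ (2 * (k : ℝ) ^ 3 / (2 * Real.pi) ^ 3) * zeta3 := by
  have hk0 : (0:ℝ) < k := by positivity
  have hπ : (0:ℝ) < π := Real.pi_pos
  set c : ℝ := 12/(2*π)^3 with hc
  have hcpos : 0 < c := by positivity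
  set g : ℕ → ℕ → ℝ := fun d m =>
    c * (((m:ℝ)^3)⁻¹ * Real.sin (2*π*m*((d:ℝ)/k))) * Real.cot (π*d*h/k) with hgdef
  have hg : ∀ d ∈ Finset.Icc 1 (k-1),
      HasSum (g d) ((((d:ℝ)/k)^3 - 3/2*((d:ℝ)/k)^2 + 1/2*((d:ℝ)/k)) * Real.cot (π*d*h/k)) := by
    intro d hd
    have hx : (d:ℝ)/k ∈ Set.Icc (0:ℝ) 1 := by
      simp only [Finset.mem_Icc] at hd
      constructor
      · positivity
      · rw [div_le_one hk0]
        exact_mod_cast (by omega : d ≤ k)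
    have hs := hasSum_one_div_nat_pow_mul_sin (k := 1) one_ne_zero hx
    norm_num [Nat.factorial] at hs
    have h2 := (hs.mul_left c).mul_right (Real.cot (π*d*h/k))
    have e : c * ((2*π)^3/2/6 * (Polynomial.aeval ((d:ℝ)/k)) (Polynomial.bernoulli 3))
          * Real.cot (π*d*h/k)
        = (((d:ℝ)/k)^3 - 3/2*((d:ℝ)/k)^2 + 1/2*((d:ℝ)/k)) * Real.cot (π*d*h/k) := by
      rw [bern3_eval]
      rw [hc]
      have h3 : (2*π)^3 ≠ 0 := by positivity
      field_simp
      ring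
    rw [e] at h2
    exact h2
  set F : ℕ → ℝ := fun m => ∑ d ∈ Finset.Icc 1 (k-1), g d m with hF
  have hstep1 : ∑ d ∈ Finset.Icc 1 (k-1),
      (((d:ℝ)/k)^3 - 3/2*((d:ℝ)/k)^2 + 1/2*((d:ℝ)/k)) * Real.cot (π*d*h/k)
      = ∑' m, F m := by
    rw [Finset.sum_congr rfl fun d hd => ((hg d hd).tsum_eq).symm]
    exact (Summable.tsum_finsetSum fun d hd => (hg d hd).summable).symm
  have hFeq : ∀ m : ℕ, F m = (c * ((m:ℝ)^3)⁻¹)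
      * ∑ d ∈ Finset.Icc 1 (k-1), Real.sin (2*π*m*d/k) * Real.cot (π*d*h/k) := by
    intro m
    rw [hF, Finset.mul_sum]
    refine Finset.sum_congr rfl fun d _ => ?_
    show c * (((m:ℝ)^3)⁻¹ * Real.sin (2*π*m*((d:ℝ)/k))) * Real.cot (π*d*h/k) = _
    rw [show 2*π*(m:ℝ)*((d:ℝ)/k) = 2*π*m*d/k by ring]
    ring
  set G : ℕ → ℝ := fun m => (c * k) * ((m:ℝ)^3)⁻¹ with hGdef
  have hFb : ∀ m : ℕ, |F m| ≤ G m := by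
    intro m
    have h1 : (0:ℝ) ≤ c * ((m:ℝ)^3)⁻¹ := by positivity
    rw [hFeq m, abs_mul, abs_of_nonneg h1]
    calc c * ((m:ℝ)^3)⁻¹ * |∑ d ∈ Finset.Icc 1 (k-1),
          Real.sin (2*π*m*d/k) * Real.cot (π*d*h/k)|
        ≤ c * ((m:ℝ)^3)⁻¹ * k :=
          mul_le_mul_of_nonneg_left (inner_sum_bound h k hk hh1 hh hgcd m) h1
      _ = G m := by rw [hGdef]; ring
  have hsum3 : Summable (fun m : ℕ => ((m:ℝ)^3)⁻¹) := by
    simpa [one_div] using Real.summable_one_div_nat_pow.mpr (by norm_num : 1 < 3)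
  have hG : Summable G := hsum3.mul_left (c*k)
  have hFabs : Summable (fun m => |F m|) :=
    Summable.of_nonneg_of_le (fun m => abs_nonneg _) hFb hG
  have habs : |∑' m, F m| ≤ ∑' m, |F m| := by
    simpa [Real.norm_eq_abs] using norm_tsum_le_tsum_norm
      (f := F) (by simpa [Real.norm_eq_abs] using hFabs)
  have hle : ∑' m, |F m| ≤ ∑' m, G m := Summable.tsum_le_tsum hFb hFabs hG
  have hz : ∑' m : ℕ, ((m:ℝ)^3)⁻¹ = zeta3 := by
    rw [Summable.tsum_eq_zero_add hsum3]
    simp only [Nat.cast_zero]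
    norm_num
    rw [zeta3]
    refine tsum_congr fun n => ?_
    push_cast
    rw [one_div]
  have hGsum : ∑' m, G m = (c * k) * zeta3 := by
    rw [hGdef, tsum_mul_left, hz]
  rw [hstep1, abs_mul, abs_of_nonneg (by positivity : (0:ℝ) ≤ (k:ℝ)^2/6)]
  calc (k:ℝ)^2/6 * |∑' m, F m|
      ≤ (k:ℝ)^2/6 * ((c*k) * zeta3) := by
        apply mul_le_mul_of_nonneg_left _ (by positivity)
        rw [← hGsum]
        exact habs.trans hle
    _ = (2 * (k:ℝ)^3 / (2*π)^3) * zeta3 := by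
        rw [hc]
        have h3 : (2*π)^3 ≠ 0 := by positivity
        field_simp
        ring
end

section
/- Let p ≥ 2 be an integer, let k ≥ 2, and let h, h′ be integers with 1 ≤ h, h′ < k, gcd(h,k) = 1, and h·h′ ≡ 1 (mod k). Then Σ_{d=1}^{k} Σ_{d′=1}^{k} B_{p+2}(d/k)·B_p(d′/k)·e^{−2πi d d′ h/k} = ( k·(p+2)!·p! / (2πi)^{2p+2} ) · Σ_{ℓ ∈ ℤ, ℓ ≠ 0} Σ_{ℓ′ ∈ ℤ, ℓ′ ≠ 0} e^{2πi ℓ ℓ′ h′/k} / (ℓ^{p+2}·(ℓ′)^p), where the double series on the right converges absolutely. -/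
/-- The `m`-th Bernoulli polynomial evaluated at a real `x`. -/
noncomputable def bernoulliPoly (m : ℕ) (x : ℝ) : ℝ :=
  Polynomial.aeval x (Polynomial.bernoulli m)

/-!
For `m ≥ 2` and `0 ≤ x ≤ 1` the Fourier expansion
`Bₘ(x) = -(m! / (2πi)^m) ∑_{n ≠ 0} e(n x) / n^m` converges absolutely. Substituting `x = d/k`
and `x = d'/k` and multiplying, the finite double sum becomes an absolutely convergent series
over `(ℓ, ℓ')` whose coefficient is the character sum
`∑_{d, d' mod k} e((ℓ d + ℓ' d' - h d d') / k)`. Summing over `d'` forces `d ≡ ℓ' h' (mod k)`,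
because `h` is invertible mod `k` with inverse `h'`, so the character sum is `k e(ℓ ℓ' h' / k)`.
-/

open Finset Complex ZMod
open scoped Real Nat

theorem AddChar.sum_sum_mul_mul_neg_mul_eq_card_mul {R R' : Type*} [CommRing R] [Fintype R]
    [CommRing R'] [IsDomain R'] {ψ : AddChar R R'} (hψ : ψ.IsPrimitive) {u v : R}
    (huv : u * v = 1) (x y : R) :
    ∑ a, ∑ b, ψ (x * a) * ψ (y * b) * ψ (-(a * b * u)) = Fintype.card R * ψ (x * y * v) := by
  classical
  have hsolve : ∀ a, y - a * u = 0 ↔ a = y * v := fun a => by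
    rw [sub_eq_zero]
    constructor
    · rintro rfl
      rw [mul_assoc, huv, mul_one]
    · rintro rfl
      rw [mul_assoc, mul_comm v, huv, mul_one]
  have hinner : ∀ a, ∑ b, ψ (x * a) * ψ (y * b) * ψ (-(a * b * u)) =
      ψ (x * a) * ∑ b, ψ (b * (y - a * u)) := fun a => by
    rw [mul_sum]
    refine sum_congr rfl fun b _ => ?_
    rw [mul_assoc, ← AddChar.map_add_eq_mul]
    congr 2
    ring
  simp only [hinner, AddChar.sum_mulShift _ hψ, hsolve, Nat.cast_ite, Nat.cast_zero, mul_ite,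
    mul_zero, sum_ite_eq', mem_univ, if_true]
  rw [mul_comm, mul_assoc]

theorem ZMod.sum_Icc_one_natCast {M : Type*} [AddCommMonoid M] (k : ℕ) [NeZero k]
    (f : ZMod k → M) : ∑ d ∈ Icc 1 k, f d = ∑ a, f a := by
  have hinj : Set.InjOn (fun d : ℕ => (d : ZMod k)) (Icc 1 k) := by
    intro d hd e he hde
    simp only [coe_Icc, Set.mem_Icc] at hd he
    have hdvd : (k : ℤ) ∣ (d : ℤ) - e := (ZMod.intCast_eq_intCast_iff_dvd_sub _ _ _).mp
      (by exact_mod_cast hde.symm)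
    have : (d : ℤ) - e = 0 :=
      Int.eq_zero_of_abs_lt_dvd hdvd (abs_sub_lt_iff.mpr ⟨by omega, by omega⟩)
    omega
  have hcard : #((Icc 1 k).image fun d : ℕ => (d : ZMod k)) = Fintype.card (ZMod k) := by
    rw [card_image_of_injOn hinj, Nat.card_Icc, ZMod.card, Nat.add_sub_cancel]
  rw [← sum_image hinj, eq_univ_of_card _ hcard]

lemma ZMod.norm_stdAddChar {k : ℕ} [NeZero k] (a : ZMod k) : ‖stdAddChar a‖ = 1 :=
  Circle.norm_coe _

lemma summable_norm_inv_intCast_pow {m : ℕ} (hm : 2 ≤ m) :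
    Summable fun n : ℤ => ‖((n : ℂ) ^ m)⁻¹‖ := by
  simpa [abs_pow] using (Real.summable_one_div_int_pow.mpr hm).abs

lemma hasSum_inv_pow_mul_stdAddChar {m k : ℕ} [NeZero k] (hm : 2 ≤ m) {d : ℕ} (hd : d ≤ k) :
    HasSum (fun n : ℤ => ((n : ℂ) ^ m)⁻¹ * stdAddChar (n * d : ZMod k))
      (-(2 * π * I) ^ m / m ! * bernoulliPoly m (d / k)) := by
  have hx : (d / k : ℝ) ∈ Set.Icc 0 1 :=
    ⟨by positivity, div_le_one_of_le₀ (by exact_mod_cast hd) (by positivity)⟩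
  convert hasSum_one_div_pow_mul_fourier_mul_bernoulliFun hm hx using 1
  · ext n
    rw [fourier_coe_apply, ← Int.cast_natCast d, ← Int.cast_mul, stdAddChar_coe, one_div]
    push_cast
    ring_nf
  · rw [bernoulliPoly, bernoulliFun, Polynomial.aeval_def, Polynomial.eval_map]

lemma hasSum_prod_inv_pow_mul_stdAddChar {m n k : ℕ} [NeZero k] (hm : 2 ≤ m) (hn : 2 ≤ n)
    {d d' : ℕ} (hd : d ≤ k) (hd' : d' ≤ k) :
    HasSum (fun l : ℤ × ℤ => ((l.1 : ℂ) ^ m)⁻¹ * stdAddChar (l.1 * d : ZMod k) *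
        (((l.2 : ℂ) ^ n)⁻¹ * stdAddChar (l.2 * d' : ZMod k)))
      (-(2 * π * I) ^ m / m ! * bernoulliPoly m (d / k) *
        (-(2 * π * I) ^ n / n ! * bernoulliPoly n (d' / k))) := by
  have hnorm : ∀ {j : ℕ}, 2 ≤ j → ∀ e : ℕ,
      Summable fun l : ℤ => ‖((l : ℂ) ^ j)⁻¹ * stdAddChar (l * e : ZMod k)‖ := fun hj e => by
    simpa only [norm_mul, ZMod.norm_stdAddChar, mul_one] using summable_norm_inv_intCast_pow hj
  have hf := hasSum_inv_pow_mul_stdAddChar hm hd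
  have hg := hasSum_inv_pow_mul_stdAddChar hn hd'
  have hfg := summable_mul_of_summable_norm (hnorm hm d) (hnorm hn d')
  -- `HasSum.mul` reaches the ring structure of `ℂ` by another instance path; `convert` bridges it.
  convert hf.mul hg hfg using 3

lemma ZMod.sum_Icc_sum_Icc_stdAddChar (k : ℕ) [NeZero k] {u v : ZMod k} (huv : u * v = 1)
    (x y : ZMod k) :
    ∑ d ∈ Icc 1 k, ∑ d' ∈ Icc 1 k,
      stdAddChar (x * d : ZMod k) * stdAddChar (y * d' : ZMod k) *
        stdAddChar (-(d * d' * u) : ZMod k) =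
        k * stdAddChar (x * y * v) := by
  calc _ = ∑ a : ZMod k, ∑ b : ZMod k,
        stdAddChar (x * a) * stdAddChar (y * b) * stdAddChar (-(a * b * u)) := by
        rw [← ZMod.sum_Icc_one_natCast]
        exact sum_congr rfl fun d _ => by rw [← ZMod.sum_Icc_one_natCast]
    _ = _ := by
        rw [AddChar.sum_sum_mul_mul_neg_mul_eq_card_mul (isPrimitive_stdAddChar k) huv, ZMod.card]

lemma hasSum_mul_sum_sum_bernoulliPoly_mul_stdAddChar {m n k : ℕ} [NeZero k] (hm : 2 ≤ m)
    (hn : 2 ≤ n) {u v : ZMod k} (huv : u * v = 1) :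
    HasSum (fun l : ℤ × ℤ => k * (((l.1 : ℂ) ^ m)⁻¹ * ((l.2 : ℂ) ^ n)⁻¹ *
        stdAddChar (l.1 * l.2 * v : ZMod k)))
      (-(2 * π * I) ^ m / m ! * (-(2 * π * I) ^ n / n !) *
        ∑ d ∈ Icc 1 k, ∑ d' ∈ Icc 1 k, (bernoulliPoly m (d / k) : ℂ) * bernoulliPoly n (d' / k) *
          stdAddChar (-(d * d' * u) : ZMod k)) := by
  have hsum := hasSum_sum fun d (hd : d ∈ Icc 1 k) => hasSum_sum fun d' (hd' : d' ∈ Icc 1 k) =>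
    (hasSum_prod_inv_pow_mul_stdAddChar hm hn (mem_Icc.mp hd).2 (mem_Icc.mp hd').2).mul_right
      (stdAddChar (-(d * d' * u) : ZMod k))
  convert hsum using 1
  · rfl -- the two `AddCommMonoid ℂ` instances
  · ext l
    rw [mul_left_comm, ← ZMod.sum_Icc_sum_Icc_stdAddChar k huv, mul_sum]
    exact sum_congr rfl fun d _ => by rw [mul_sum]; exact sum_congr rfl fun d' _ => by ring
  · rw [mul_sum]
    exact sum_congr rfl fun d _ => by rw [mul_sum]; exact sum_congr rfl fun d' _ => by ring

lemma sum_sum_bernoulliPoly_mul_stdAddChar_eq_tsum {m n k : ℕ} [NeZero k] (hm : 2 ≤ m)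
    (hn : 2 ≤ n) {u v : ZMod k} (huv : u * v = 1) :
    ∑ d ∈ Icc 1 k, ∑ d' ∈ Icc 1 k, (bernoulliPoly m (d / k) : ℂ) * bernoulliPoly n (d' / k) *
        stdAddChar (-(d * d' * u) : ZMod k) =
      k * m ! * n ! / (2 * π * I) ^ (m + n) *
        ∑' l : ℤ × ℤ, ((l.1 : ℂ) ^ m)⁻¹ * ((l.2 : ℂ) ^ n)⁻¹ *
          stdAddChar (l.1 * l.2 * v : ZMod k) := by
  have h2πI : (2 * π * I : ℂ) ≠ 0 := by simp [Real.pi_ne_zero, I_ne_zero]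
  have hm_fac : (m ! : ℂ) ≠ 0 := Nat.cast_ne_zero.mpr (Nat.factorial_ne_zero _)
  have hn_fac : (n ! : ℂ) ≠ 0 := Nat.cast_ne_zero.mpr (Nat.factorial_ne_zero _)
  have hseries := (hasSum_mul_sum_sum_bernoulliPoly_mul_stdAddChar hm hn huv).tsum_eq
  rw [tsum_mul_left] at hseries
  calc _ = m ! * n ! / (2 * π * I) ^ (m + n) * (-(2 * π * I) ^ m / m ! * (-(2 * π * I) ^ n / n !) *
        ∑ d ∈ Icc 1 k, ∑ d' ∈ Icc 1 k, (bernoulliPoly m (d / k) : ℂ) * bernoulliPoly n (d' / k) *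
          stdAddChar (-(d * d' * u) : ZMod k)) := by
        field_simp
        ring
    _ = _ := by
        rw [← hseries]
        ring

-- Since `(0 : ℂ)⁻¹ = 0`, the terms excluded on the left vanish on the right as well.
lemma ite_eq_inv_pow_mul_inv_pow_mul {m n : ℕ} (hm : m ≠ 0) (hn : n ≠ 0) (a b : ℤ) (z : ℂ) :
    (if a = 0 ∨ b = 0 then 0 else z / ((a : ℂ) ^ m * (b : ℂ) ^ n)) =
      ((a : ℂ) ^ m)⁻¹ * ((b : ℂ) ^ n)⁻¹ * z := by
  split_ifs with hab
  · rcases hab with rfl | rfl <;> simp [hm, hn]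
  · rw [div_eq_mul_inv, mul_inv, mul_comm]

theorem residue_sum_fourier_general (p k h h' : ℕ) (hp : 2 ≤ p) (hk : 2 ≤ k)
    (hinv : h * h' ≡ 1 [MOD k]) :
    Summable (fun l : ℤ × ℤ => ‖if l.1 = 0 ∨ l.2 = 0 then (0 : ℂ) else
      Complex.exp (2 * Real.pi * Complex.I * l.1 * l.2 * h' / k) /
        ((l.1 : ℂ) ^ (p + 2) * (l.2 : ℂ) ^ p)‖) ∧
    ∑ d ∈ Finset.Icc 1 k, ∑ d' ∈ Finset.Icc 1 k,
        ((bernoulliPoly (p + 2) ((d : ℝ) / k) : ℂ)) *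
          ((bernoulliPoly p ((d' : ℝ) / k) : ℂ)) *
            Complex.exp (-(2 * Real.pi * Complex.I * d * d' * h / k))
      = ((k : ℂ) * ((p + 2).factorial : ℂ) * (p.factorial : ℂ) /
            (2 * Real.pi * Complex.I) ^ (2 * p + 2)) *
          ∑' l : ℤ × ℤ, (if l.1 = 0 ∨ l.2 = 0 then (0 : ℂ) else
            Complex.exp (2 * Real.pi * Complex.I * l.1 * l.2 * h' / k) /
              ((l.1 : ℂ) ^ (p + 2) * (l.2 : ℂ) ^ p)) := by
  have : NeZero k := ⟨by omega⟩
  have hunit : (h * h' : ZMod k) = 1 := by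
    exact_mod_cast (ZMod.natCast_eq_natCast_iff _ _ _).mpr hinv
  have hexp (j : ℤ) : Complex.exp (2 * π * I * j / k) = stdAddChar (j : ZMod k) :=
    (stdAddChar_coe j).symm
  have hterm (l : ℤ × ℤ) : (if l.1 = 0 ∨ l.2 = 0 then (0 : ℂ) else
      Complex.exp (2 * π * I * l.1 * l.2 * h' / k) / ((l.1 : ℂ) ^ (p + 2) * (l.2 : ℂ) ^ p)) =
        ((l.1 : ℂ) ^ (p + 2))⁻¹ * ((l.2 : ℂ) ^ p)⁻¹ * stdAddChar (l.1 * l.2 * h' : ZMod k) := by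
    rw [ite_eq_inv_pow_mul_inv_pow_mul (by omega) (by omega),
      show (l.1 * l.2 * h' : ZMod k) = ((l.1 * l.2 * h' : ℤ) : ZMod k) by push_cast; rfl, ← hexp]
    push_cast
    ring_nf
  have htwist (d d' : ℕ) :
      Complex.exp (-(2 * π * I * d * d' * h / k)) = stdAddChar (-(d * d' * h) : ZMod k) := by
    rw [show (-(d * d' * h) : ZMod k) = ((-(d * d' * h) : ℤ) : ZMod k) by push_cast; rfl, ← hexp]
    push_cast
    ring_nf
  simp only [hterm, htwist]
  refine ⟨?_, ?_⟩
  · refine ((summable_norm_inv_intCast_pow (m := p + 2) (by omega)).mul_norm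
      (summable_norm_inv_intCast_pow hp)).congr fun l => ?_
    rw [norm_mul _ (stdAddChar _), ZMod.norm_stdAddChar, mul_one]
  · rw [sum_sum_bernoulliPoly_mul_stdAddChar_eq_tsum (by omega) hp hunit,
      show p + 2 + p = 2 * p + 2 by ring]

theorem residue_sum_fourier (p k h h' : ℕ) (hp : 2 ≤ p) (hk : 2 ≤ k)
    (hh1 : 1 ≤ h) (hh : h < k) (hh'1 : 1 ≤ h') (hh' : h' < k)
    (hgcd : Nat.gcd h k = 1) (hinv : h * h' ≡ 1 [MOD k]) :
    Summable (fun l : ℤ × ℤ => ‖if l.1 = 0 ∨ l.2 = 0 then (0 : ℂ) else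
      Complex.exp (2 * Real.pi * Complex.I * l.1 * l.2 * h' / k) /
        ((l.1 : ℂ) ^ (p + 2) * (l.2 : ℂ) ^ p)‖) ∧
    ∑ d ∈ Finset.Icc 1 k, ∑ d' ∈ Finset.Icc 1 k,
        ((bernoulliPoly (p + 2) ((d : ℝ) / k) : ℂ)) *
          ((bernoulliPoly p ((d' : ℝ) / k) : ℂ)) *
            Complex.exp (-(2 * Real.pi * Complex.I * d * d' * h / k))
      = ((k : ℂ) * ((p + 2).factorial : ℂ) * (p.factorial : ℂ) /
            (2 * Real.pi * Complex.I) ^ (2 * p + 2)) *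
          ∑' l : ℤ × ℤ, (if l.1 = 0 ∨ l.2 = 0 then (0 : ℂ) else
            Complex.exp (2 * Real.pi * Complex.I * l.1 * l.2 * h' / k) /
              ((l.1 : ℂ) ^ (p + 2) * (l.2 : ℂ) ^ p)) :=
  residue_sum_fourier_general p k h h' hp hk hinv
end

section
/- Define f₁(λ) for λ > 0 by 1 + f₁(λ) := (1/3)·( g(λ)^{−2} + 2·g(λ) + 6·λ·log g(λ) ). Then, as λ → 0⁺, f₁(λ) = −λ² + λ³/3 + O(λ⁵). -/
set_option maxHeartbeats 2000000

open Asymptotics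

theorem f1_expansion (g : ℝ → ℝ)
    (hg : ∀ lam : ℝ, 0 < lam → (0 < g lam ∧ (g lam) ^ 3 + 3 * lam * (g lam) ^ 2 = 1 ∧
      ∀ y : ℝ, 0 < y → y ^ 3 + 3 * lam * y ^ 2 = 1 → y = g lam)) :
    (fun lam : ℝ =>
        ((1 / 3) * (1 / (g lam) ^ 2 + 2 * g lam + 6 * lam * Real.log (g lam)) - 1)
          - (-lam ^ 2 + lam ^ 3 / 3))
      =O[nhdsWithin 0 (Set.Ioi 0)] (fun lam : ℝ => lam ^ 5) := by
  rw [Asymptotics.isBigO_iff]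
  refine ⟨2, ?_⟩
  filter_upwards [Ioo_mem_nhdsGT_of_mem
    (Set.left_mem_Ico.2 (by norm_num : (0:ℝ) < 1/10))] with lam hlam
  obtain ⟨hl0, hl1⟩ := hlam
  obtain ⟨hgpos, hcubic, -⟩ := hg lam hl0
  set G := g lam with hG
  -- power facts about lam
  have hl1' : lam ≤ 1/10 := hl1.le
  have hp5 : (0:ℝ) < lam ^ 5 := pow_pos hl0 5
  -- lower bound on G: p0 ≤ G where p0 = 1 - lam + lam^2 - 2/3 lam^3
  have hp0pos : (0:ℝ) < 1 - lam + lam^2 - 2/3*lam^3 := by nlinarith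
  have hkey1 : (G - (1 - lam + lam^2 - 2/3*lam^3)) *
      (G^2 + G*(1 - lam + lam^2 - 2/3*lam^3) + (1 - lam + lam^2 - 2/3*lam^3)^2
        + 3*lam*(G + (1 - lam + lam^2 - 2/3*lam^3)))
      = 1 - ((1 - lam + lam^2 - 2/3*lam^3)^3 + 3*lam*(1 - lam + lam^2 - 2/3*lam^3)^2) := by
    linear_combination hcubic
  have hfact1 : 0 < G^2 + G*(1 - lam + lam^2 - 2/3*lam^3) + (1 - lam + lam^2 - 2/3*lam^3)^2
      + 3*lam*(G + (1 - lam + lam^2 - 2/3*lam^3)) := by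
    nlinarith [mul_pos hgpos hp0pos, sq_nonneg G, sq_nonneg (1 - lam + lam^2 - 2/3*lam^3),
      mul_pos hl0 (add_pos hgpos hp0pos)]
  have hpow : ∀ k : ℕ, lam ^ (5 + k) ≤ lam ^ 5 * (1/10) ^ k := by
    intro k
    calc lam ^ (5 + k) = lam ^ 5 * lam ^ k := by ring
      _ ≤ lam ^ 5 * (1/10) ^ k :=
        mul_le_mul_of_nonneg_left (pow_le_pow_left₀ hl0.le hl1' k) hp5.le
  have hrhs1 : 0 < 1 - ((1 - lam + lam^2 - 2/3*lam^3)^3 + 3*lam*(1 - lam + lam^2 - 2/3*lam^3)^2) := by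
    have h1 := hpow 1
    have h3 := hpow 3
    have h2 := pow_pos hl0 7
    have h4 := pow_pos hl0 9
    norm_num at h1 h3 ⊢
    linarith
  have hlow : 1 - lam + lam^2 - 2/3*lam^3 ≤ G := by
    by_contra hc
    push_neg at hc
    nlinarith [mul_nonpos_of_nonpos_of_nonneg (sub_nonpos.2 hc.le) hfact1.le]
  -- upper bound: G ≤ p0 + lam^5
  have hkey2 : (G - (1 - lam + lam^2 - 2/3*lam^3 + lam^5)) *
      (G^2 + G*(1 - lam + lam^2 - 2/3*lam^3 + lam^5) + (1 - lam + lam^2 - 2/3*lam^3 + lam^5)^2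
        + 3*lam*(G + (1 - lam + lam^2 - 2/3*lam^3 + lam^5)))
      = 1 - ((1 - lam + lam^2 - 2/3*lam^3 + lam^5)^3
        + 3*lam*(1 - lam + lam^2 - 2/3*lam^3 + lam^5)^2) := by
    linear_combination hcubic
  have hp1pos : (0:ℝ) < 1 - lam + lam^2 - 2/3*lam^3 + lam^5 := by nlinarith
  have hfact2 : 0 < G^2 + G*(1 - lam + lam^2 - 2/3*lam^3 + lam^5)
      + (1 - lam + lam^2 - 2/3*lam^3 + lam^5)^2
      + 3*lam*(G + (1 - lam + lam^2 - 2/3*lam^3 + lam^5)) := by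
    nlinarith [mul_pos hgpos hp1pos, sq_nonneg G, sq_nonneg (1 - lam + lam^2 - 2/3*lam^3 + lam^5),
      mul_pos hl0 (add_pos hgpos hp1pos)]
  have hrhs2 : 1 - ((1 - lam + lam^2 - 2/3*lam^3 + lam^5)^3
      + 3*lam*(1 - lam + lam^2 - 2/3*lam^3 + lam^5)^2) < 0 := by
    have h3 := hpow 3
    have h5 := hpow 5
    have h8 := hpow 8
    have p6 := pow_pos hl0 6
    have p7 := pow_pos hl0 7
    have p9 := pow_pos hl0 9
    have p11 := pow_pos hl0 11
    have p12 := pow_pos hl0 12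
    have p15 := pow_pos hl0 15
    norm_num at h3 h5 h8 ⊢
    linarith
  have hupp : G ≤ 1 - lam + lam^2 - 2/3*lam^3 + lam^5 := by
    by_contra hc
    push_neg at hc
    nlinarith [mul_pos (sub_pos.2 hc) hfact2]
  -- basic consequences
  have hG1 : G < 1 := by nlinarith
  have hGhalf : (1:ℝ)/2 < G := by nlinarith
  set t := 1 - G with htdef
  have ht0 : 0 < t := by simp only [htdef]; linarith
  have ht1 : t < 1 := by simp only [htdef]; linarith
  have htlam : t ≤ lam := by simp only [htdef]; nlinarith
  have hts : lam - lam^2 + 2/3*lam^3 - lam^5 ≤ t := by simp only [htdef]; linarith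
  have htb : t ≤ lam - lam^2 + 2/3*lam^3 := by simp only [htdef]; linarith
  -- log estimate
  have hlogG : |(t + t^2/2 + t^3/3 + t^4/4) + Real.log G| ≤ t^5 / (1 - t) := by
    have habs : |t| < 1 := by rw [abs_of_pos ht0]; exact ht1
    have hlog := Real.abs_log_sub_add_sum_range_le habs 4
    rw [abs_of_pos ht0] at hlog
    simp [Finset.sum_range_succ] at hlog
    norm_num at hlog
    have h1t : 1 - t = G := by simp only [htdef]; ring
    rw [h1t] at hlog
    convert hlog using 3
  have hE : |(t + t^2/2 + t^3/3 + t^4/4) + Real.log G| ≤ 2 * lam^5 := by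
    refine hlogG.trans ?_
    have h1t : 1 - t = G := by simp only [htdef]; ring
    rw [h1t]
    have ht5 : t^5 ≤ lam^5 := pow_le_pow_left₀ ht0.le htlam 5
    calc t^5 / G ≤ lam^5 / (1/2) := by
          apply div_le_div₀ (by positivity) ht5 (by norm_num) hGhalf.le
      _ = 2 * lam^5 := by ring
  -- bounds on the polynomial part A
  have ht'0 : (0:ℝ) ≤ lam - lam^2 + 2/3*lam^3 - lam^5 := by nlinarith
  have hA2 : -t + lam + lam^2 - lam^3/3 - 2*lam*(t + t^2/2 + t^3/3 + t^4/4) ≤ lam^5 := by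
    have e2 := pow_le_pow_left₀ ht'0 hts 2
    have e3 := pow_le_pow_left₀ ht'0 hts 3
    have e4 := pow_le_pow_left₀ ht'0 hts 4
    have m1 := mul_nonneg hl0.le (sub_nonneg.2 hts)
    have m2 := mul_nonneg hl0.le (sub_nonneg.2 e2)
    have m3 := mul_nonneg hl0.le (sub_nonneg.2 e3)
    have m4 := mul_nonneg hl0.le (sub_nonneg.2 e4)
    have hend : -(lam - lam^2 + 2/3*lam^3 - lam^5) + lam + lam^2 - lam^3/3
        - 2*lam*((lam - lam^2 + 2/3*lam^3 - lam^5)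
          + (lam - lam^2 + 2/3*lam^3 - lam^5)^2/2
          + (lam - lam^2 + 2/3*lam^3 - lam^5)^3/3
          + (lam - lam^2 + 2/3*lam^3 - lam^5)^4/4) ≤ lam^5 := by
      have k1 := hpow 1
      have k2 := hpow 2
      have k3 := hpow 3
      have k5 := hpow 5
      have k6 := hpow 6
      have k8 := hpow 8
      have k9 := hpow 9
      have k11 := hpow 11
      have k12 := hpow 12
      have k14 := hpow 14
      have q9 := pow_pos hl0 9
      have q12 := pow_pos hl0 12
      have q15 := pow_pos hl0 15
      have q18 := pow_pos hl0 18
      have q21 := pow_pos hl0 21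
      norm_num at k1 k2 k3 k5 k6 k8 k9 k11 k12 k14 ⊢
      linarith
    linarith [m1, m2, m3, m4]
  have hA1 : -(lam^5) ≤ -t + lam + lam^2 - lam^3/3 - 2*lam*(t + t^2/2 + t^3/3 + t^4/4) := by
    have e2 := pow_le_pow_left₀ ht0.le htb 2
    have e3 := pow_le_pow_left₀ ht0.le htb 3
    have e4 := pow_le_pow_left₀ ht0.le htb 4
    have m1 := mul_nonneg hl0.le (sub_nonneg.2 htb)
    have m2 := mul_nonneg hl0.le (sub_nonneg.2 e2)
    have m3 := mul_nonneg hl0.le (sub_nonneg.2 e3)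
    have m4 := mul_nonneg hl0.le (sub_nonneg.2 e4)
    have hend : -(lam^5) ≤ -(lam - lam^2 + 2/3*lam^3) + lam + lam^2 - lam^3/3
        - 2*lam*((lam - lam^2 + 2/3*lam^3)
          + (lam - lam^2 + 2/3*lam^3)^2/2
          + (lam - lam^2 + 2/3*lam^3)^3/3
          + (lam - lam^2 + 2/3*lam^3)^4/4) := by
      have k2 := hpow 2
      have k4 := hpow 4
      have k6 := hpow 6
      have k8 := hpow 8
      have q8 := pow_pos hl0 8
      have q10 := pow_pos hl0 10
      have q12 := pow_pos hl0 12
      norm_num at k2 k4 k6 k8 ⊢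
      linarith
    linarith [m1, m2, m3, m4]
  -- rewrite the expression
  have hinv : 1 / G^2 = G + 3*lam := by
    field_simp
    linear_combination -hcubic
  rw [Real.norm_eq_abs, Real.norm_eq_abs, hinv]
  have hexpr : 1/3 * ((G + 3*lam) + 2*G + 6*lam*Real.log G) - 1 - (-lam^2 + lam^3/3)
      = (-t + lam + lam^2 - lam^3/3 - 2*lam*(t + t^2/2 + t^3/3 + t^4/4))
        + 2*lam*((t + t^2/2 + t^3/3 + t^4/4) + Real.log G) := by
    simp only [htdef]; ring
  rw [hexpr]
  have habsA : |(-t + lam + lam^2 - lam^3/3 - 2*lam*(t + t^2/2 + t^3/3 + t^4/4))| ≤ lam^5 :=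
    abs_le.2 ⟨hA1, hA2⟩
  have habs2 : |2*lam*((t + t^2/2 + t^3/3 + t^4/4) + Real.log G)| ≤ 2*lam*(2*lam^5) := by
    rw [abs_mul, abs_of_pos (by positivity : (0:ℝ) < 2*lam)]
    exact mul_le_mul_of_nonneg_left hE (by positivity)
  have k1 := hpow 1
  norm_num at k1
  calc |(-t + lam + lam^2 - lam^3/3 - 2*lam*(t + t^2/2 + t^3/3 + t^4/4))
        + 2*lam*((t + t^2/2 + t^3/3 + t^4/4) + Real.log G)|
      ≤ |(-t + lam + lam^2 - lam^3/3 - 2*lam*(t + t^2/2 + t^3/3 + t^4/4))|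
        + |2*lam*((t + t^2/2 + t^3/3 + t^4/4) + Real.log G)| := abs_add_le _ _
    _ ≤ lam^5 + 2*lam*(2*lam^5) := add_le_add habsA habs2
    _ ≤ 2 * |lam^5| := by rw [abs_of_pos hp5]; nlinarith
end

section
/- For every λ > 0 one has λ·g(λ)² < 1/3, and the function F(λ) := λ·g(λ)² / √(1 − λ·g(λ)²) is strictly increasing on (0,∞), satisfies F(λ) < 1/√6 for all λ > 0, and tends to 1/√6 as λ → ∞. -/
open Filter

theorem F_properties (g : ℝ → ℝ)
    (hg : ∀ lam : ℝ, 0 < lam → (0 < g lam ∧ (g lam) ^ 3 + 3 * lam * (g lam) ^ 2 = 1 ∧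
      ∀ y : ℝ, 0 < y → y ^ 3 + 3 * lam * y ^ 2 = 1 → y = g lam)) :
    (∀ lam : ℝ, 0 < lam → lam * (g lam) ^ 2 < 1 / 3) ∧
    StrictMonoOn (fun lam : ℝ => lam * (g lam) ^ 2 / Real.sqrt (1 - lam * (g lam) ^ 2))
      (Set.Ioi 0) ∧
    (∀ lam : ℝ, 0 < lam →
      lam * (g lam) ^ 2 / Real.sqrt (1 - lam * (g lam) ^ 2) < 1 / Real.sqrt 6) ∧
    Tendsto (fun lam : ℝ => lam * (g lam) ^ 2 / Real.sqrt (1 - lam * (g lam) ^ 2))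
      atTop (nhds (1 / Real.sqrt 6)) := by
  have hgpos : ∀ lam : ℝ, 0 < lam → 0 < g lam := fun lam h => (hg lam h).1
  have heq : ∀ lam : ℝ, 0 < lam → (g lam) ^ 3 + 3 * lam * (g lam) ^ 2 = 1 :=
    fun lam h => (hg lam h).2.1
  have hglt1 : ∀ lam : ℝ, 0 < lam → g lam < 1 := by
    intro lam h
    nlinarith [hgpos lam h, heq lam h, sq_nonneg (g lam), mul_pos h (pow_pos (hgpos lam h) 2)]
  have hu : ∀ lam : ℝ, 0 < lam → lam * (g lam) ^ 2 = (1 - (g lam) ^ 3) / 3 := by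
    intro lam h; have := heq lam h; linarith
  have huub : ∀ lam : ℝ, 0 < lam → lam * (g lam) ^ 2 < 1 / 3 := by
    intro lam h
    rw [hu lam h]
    have := pow_pos (hgpos lam h) 3
    linarith
  have hupos : ∀ lam : ℝ, 0 < lam → 0 < lam * (g lam) ^ 2 :=
    fun lam h => mul_pos h (pow_pos (hgpos lam h) 2)
  -- g strictly decreasing
  have ganti : ∀ a b : ℝ, 0 < a → a < b → g b < g a := by
    intro a b ha hab
    have hb : 0 < b := ha.trans hab
    have h1 := heq a ha
    have h2 := heq b hb
    have hga := hgpos a ha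
    have hgb := hgpos b hb
    by_contra hle
    push_neg at hle
    nlinarith [mul_pos (sub_pos.2 hab) (pow_pos hgb 2),
      mul_nonneg (sub_nonneg.2 hle) (sq_nonneg (g a)),
      mul_nonneg (sub_nonneg.2 hle) (sq_nonneg (g b)),
      mul_nonneg (mul_nonneg (sub_nonneg.2 hle) hga.le) hgb.le]
  -- u strictly increasing
  have umono : ∀ a b : ℝ, 0 < a → a < b →
      a * (g a) ^ 2 < b * (g b) ^ 2 := by
    intro a b ha hab
    have hb : 0 < b := ha.trans hab
    rw [hu a ha, hu b hb]
    have hcube : (g b) ^ 3 < (g a) ^ 3 :=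
      pow_lt_pow_left₀ (ganti a b ha hab) (hgpos b hb).le (by norm_num)
    linarith
  -- phi monotone
  have phi_mono : ∀ s t : ℝ, 0 ≤ s → s < t → t < 1 →
      s / Real.sqrt (1 - s) < t / Real.sqrt (1 - t) := by
    intro s t hs hst ht1
    have h1s : 0 < 1 - s := by linarith
    have h1t : 0 < 1 - t := by linarith
    have hs1 : 0 < Real.sqrt (1 - s) := Real.sqrt_pos.2 h1s
    have ht1' : 0 < Real.sqrt (1 - t) := Real.sqrt_pos.2 h1t
    have hle : Real.sqrt (1 - t) ≤ Real.sqrt (1 - s) := Real.sqrt_le_sqrt (by linarith)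
    rw [div_lt_div_iff₀ hs1 ht1']
    calc s * Real.sqrt (1 - t) ≤ s * Real.sqrt (1 - s) :=
          mul_le_mul_of_nonneg_left hle hs
      _ < t * Real.sqrt (1 - s) := mul_lt_mul_of_pos_right hst hs1
  -- key value identity
  have h6 : (1 / 3 : ℝ) / Real.sqrt (1 - 1 / 3) = 1 / Real.sqrt 6 := by
    have h9 : Real.sqrt 6 = 3 * Real.sqrt (2 / 3) := by
      rw [show (6 : ℝ) = 3 ^ 2 * (2 / 3) by norm_num, Real.sqrt_mul (by positivity),
        Real.sqrt_sq (by norm_num)]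
    have hpos : (0 : ℝ) < Real.sqrt (2 / 3) := Real.sqrt_pos.2 (by norm_num)
    rw [show (1 : ℝ) - 1 / 3 = 2 / 3 by norm_num, h9]
    field_simp
  refine ⟨huub, ?_, ?_, ?_⟩
  · intro a ha b hb hab
    simp only [Set.mem_Ioi] at ha hb
    exact phi_mono _ _ (hupos a ha).le (umono a b ha hab) (lt_trans (huub b hb) (by norm_num))
  · intro lam h
    calc lam * (g lam) ^ 2 / Real.sqrt (1 - lam * (g lam) ^ 2)
        < (1 / 3 : ℝ) / Real.sqrt (1 - 1 / 3) :=
          phi_mono _ _ (hupos lam h).le (huub lam h) (by norm_num)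
      _ = 1 / Real.sqrt 6 := h6
  · -- limit
    have hg3 : ∀ lam : ℝ, 0 < lam → (g lam) ^ 3 ≤ 1 / (3 * lam) := by
      intro lam h
      have h1 := heq lam h
      have h2 := hgpos lam h
      have h3 := hglt1 lam h
      rw [le_div_iff₀ (by positivity)]
      nlinarith [pow_pos h2 3, pow_pos h2 2, mul_pos h (pow_pos h2 2)]
    have hg3pos : ∀ lam : ℝ, 0 < lam → (0:ℝ) ≤ (g lam) ^ 3 :=
      fun lam h => (pow_pos (hgpos lam h) 3).le
    have hlim0 : Tendsto (fun lam : ℝ => 1 / (3 * lam)) atTop (nhds 0) := by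
      have h : Tendsto (fun lam : ℝ => 3 * lam) atTop atTop :=
        Tendsto.const_mul_atTop (by norm_num) tendsto_id
      have := h.inv_tendsto_atTop
      simp only [Pi.inv_def] at this
      simpa [one_div] using this
    have hcube0 : Tendsto (fun lam : ℝ => (g lam) ^ 3) atTop (nhds 0) := by
      apply tendsto_of_tendsto_of_tendsto_of_le_of_le' tendsto_const_nhds hlim0
      · filter_upwards [eventually_gt_atTop (0:ℝ)] with lam h using hg3pos lam h
      · filter_upwards [eventually_gt_atTop (0:ℝ)] with lam h using hg3 lam h
    have hulim : Tendsto (fun lam : ℝ => lam * (g lam) ^ 2) atTop (nhds (1/3)) := by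
      have h1 : Tendsto (fun lam : ℝ => (1 - (g lam) ^ 3) / 3) atTop (nhds (1/3)) := by
        have := (tendsto_const_nhds (x := (1:ℝ)) (f := atTop)).sub hcube0
        simpa using this.div_const 3
      apply h1.congr'
      filter_upwards [eventually_gt_atTop (0:ℝ)] with lam h using (hu lam h).symm
    have hcont : ContinuousAt (fun t : ℝ => t / Real.sqrt (1 - t)) (1/3) := by
      apply ContinuousAt.div continuousAt_id
      · exact (Real.continuous_sqrt.comp (continuous_const.sub continuous_id)).continuousAt
      · rw [show (1 : ℝ) - 1 / 3 = 2 / 3 by norm_num]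
        positivity
    have := hcont.tendsto.comp hulim
    rw [← h6]
    exact this
end
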